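/- arXiv:1207.2950 — 2 statements merged into one kernel-verified Lean document; each statement's English description precedes it below -/
import Mathlib

section
/- (Periodicity of the anthyphairesis of √19 to 1: after the initial quotient, the sequence of quotients of Anth(a, b) with a² = 19b² is periodic with period 6, Anth(a,b) = [4, period(2, 1, 3, 1, 2, 8)].) Let a, b be real numbers with a > 0, b > 0 and a² = 19·b², and let e be the anthyphairesis remainder sequence of (a, b). Then e n ≠ 0 for every n, and for every k ≥ 1, ⌊e (k + 6) / e (k + 7)⌋ = ⌊e k / e (k+1)⌋. -/
/-- `e` is the anthyphairesis remainder sequence of the pair `(a, b)`: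
`e 0 = a`, `e 1 = b`, and each new remainder is obtained by division with
remainder of `e n` by `e (n+1)` (stopping, i.e. giving `0`, once a remainder vanishes). -/
def IsAnthSeq (a b : ℝ) (e : ℕ → ℝ) : Prop :=
  e 0 = a ∧ e 1 = b ∧
    ∀ n : ℕ,
      (e (n + 1) ≠ 0 → e (n + 2) = e n - (⌊e n / e (n + 1)⌋ : ℝ) * e (n + 1)) ∧
      (e (n + 1) = 0 → e (n + 2) = 0)

private lemma floor_div_eq' {x y : ℝ} (hy : 0 < y) (m : ℤ)
    (h1 : (m : ℝ) * y ≤ x) (h2 : x < ((m : ℝ) + 1) * y) : ⌊x / y⌋ = m := by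
  rw [Int.floor_eq_iff]
  constructor
  · rw [le_div_iff₀ hy]; exact h1
  · rw [div_lt_iff₀ hy]; push_cast; exact h2

set_option maxHeartbeats 2000000 in
/-- Periodicity of the anthyphairesis of `√19` to `1`: no remainder vanishes
and, after the initial quotient, the quotient sequence is periodic with
period `6`: `Anth(a, b) = [4, period(2, 1, 3, 1, 2, 8)]`. -/
theorem anthyphairesis_sqrt19_periodic
    (a b : ℝ) (ha : 0 < a) (hb : 0 < b) (h19 : a ^ 2 = 19 * b ^ 2)
    (e : ℕ → ℝ) (he : IsAnthSeq a b e) :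
    (∀ n : ℕ, e n ≠ 0) ∧
    (∀ k : ℕ, 1 ≤ k → ⌊e (k + 6) / e (k + 7)⌋ = ⌊e k / e (k + 1)⌋) := by
  obtain ⟨he0, he1, hrec⟩ := he
  have hb' : b ≠ 0 := ne_of_gt hb
  set s : ℝ := a / b with hs_def
  have hs_pos : 0 < s := div_pos ha hb
  have hs2 : s ^ 2 = 19 := by
    rw [hs_def, div_pow]
    rw [h19]
    field_simp
  have ha_eq : a = s * b := by
    rw [hs_def]; field_simp
  have hirr : Irrational s := by
    have hsq : s = Real.sqrt 19 := by
      rw [show (19 : ℝ) = s ^ 2 from hs2.symm, Real.sqrt_sq hs_pos.le]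
    rw [hsq]
    have := Nat.Prime.irrational_sqrt (p := 19) (by norm_num)
    simpa using this
  -- key nonvanishing lemma
  have hne : ∀ p q : ℤ, (p ≠ 0 ∨ q ≠ 0) → (p : ℝ) + (q : ℝ) * s ≠ 0 := by
    intro p q hpq h0
    rcases eq_or_ne q 0 with hq | hq
    · rw [hq] at h0
      simp at h0
      rcases hpq with hp | hq'
      · exact hp (by exact_mod_cast h0)
      · exact hq' hq
    · apply hirr
      have hqR : (q : ℝ) ≠ 0 := Int.cast_ne_zero.mpr hq
      refine ⟨(-p : ℚ) / (q : ℚ), ?_⟩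
      push_cast
      field_simp
      linarith
  -- invariant: consecutive remainders are integer combinations of 1 and s times b,
  -- with unimodular determinant
  have inv : ∀ n : ℕ, ∃ p q p' q' : ℤ,
      e n = ((p : ℝ) + (q : ℝ) * s) * b ∧
      e (n + 1) = ((p' : ℝ) + (q' : ℝ) * s) * b ∧
      (p * q' - q * p') ^ 2 = 1 := by
    intro n
    induction n with
    | zero =>
      exact ⟨0, 1, 1, 0, by rw [he0, ha_eq]; push_cast; ring,
        by rw [he1]; push_cast; ring, by ring⟩
    | succ n ih =>
      obtain ⟨p, q, p', q', h1, h2, hdet⟩ := ih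
      have hp'q' : p' ≠ 0 ∨ q' ≠ 0 := by
        by_contra hc
        push_neg at hc
        rw [hc.1, hc.2] at hdet
        simp at hdet
      have hen1 : e (n + 1) ≠ 0 := by
        rw [h2]; exact mul_ne_zero (hne p' q' hp'q') hb'
      have h3 := (hrec n).1 hen1
      refine ⟨p', q', p - ⌊e n / e (n + 1)⌋ * p', q - ⌊e n / e (n + 1)⌋ * q', h2, ?_, ?_⟩
      · rw [h3, h1, h2]; push_cast; ring
      · linear_combination hdet
  have hnz : ∀ n : ℕ, e n ≠ 0 := by
    intro n
    obtain ⟨p, q, p', q', h1, _, hdet⟩ := inv n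
    have hpq : p ≠ 0 ∨ q ≠ 0 := by
      by_contra hc
      push_neg at hc
      rw [hc.1, hc.2] at hdet
      simp at hdet
    rw [h1]
    exact mul_ne_zero (hne p q hpq) hb'
  refine ⟨hnz, ?_⟩
  -- sharp rational bounds on s
  have hC : (1421 : ℝ) < 326 * s := by nlinarith [hs2, hs_pos]
  have hE : (365 : ℝ) * s < 1591 := by nlinarith [hs2, hs_pos]
  have hB1 := mul_pos hb (show (0:ℝ) < 326 * s - 1421 by linarith)
  have hB2 := mul_pos hb (show (0:ℝ) < 1591 - 365 * s by linarith)
  -- explicit initial remainders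
  have e2v : e 2 = (s - 4) * b := by
    have hf : ⌊e 0 / e 1⌋ = 4 := by
      apply floor_div_eq' (by rw [he1]; exact hb)
      · rw [he0, he1, ha_eq]; push_cast; nlinarith [hC, hE, hb, hB1, hB2]
      · rw [he0, he1, ha_eq]; push_cast; nlinarith [hC, hE, hb, hB1, hB2]
    have h := (hrec 0).1 (by rw [he1]; exact hb.ne')
    rw [h, hf, he0, he1, ha_eq]; push_cast; ring
  have e2pos : 0 < e 2 := by rw [e2v]; nlinarith [hC, hE, hb, hB1, hB2]
  have e3v : e 3 = (9 - 2 * s) * b := by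
    have hf : ⌊e 1 / e 2⌋ = 2 := by
      apply floor_div_eq' e2pos
      · rw [he1, e2v]; push_cast; nlinarith [hC, hE, hb, hB1, hB2]
      · rw [he1, e2v]; push_cast; nlinarith [hC, hE, hb, hB1, hB2]
    have h := (hrec 1).1 e2pos.ne'
    rw [h, hf, he1, e2v]; push_cast; ring
  have e3pos : 0 < e 3 := by rw [e3v]; nlinarith [hC, hE, hb, hB1, hB2]
  have e4v : e 4 = (3 * s - 13) * b := by
    have hf : ⌊e 2 / e 3⌋ = 1 := by
      apply floor_div_eq' e3pos
      · rw [e2v, e3v]; push_cast; nlinarith [hC, hE, hb, hB1, hB2]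
      · rw [e2v, e3v]; push_cast; nlinarith [hC, hE, hb, hB1, hB2]
    have h := (hrec 2).1 e3pos.ne'
    rw [h, hf, e2v, e3v]; push_cast; ring
  have e4pos : 0 < e 4 := by rw [e4v]; nlinarith [hC, hE, hb, hB1, hB2]
  have e5v : e 5 = (48 - 11 * s) * b := by
    have hf : ⌊e 3 / e 4⌋ = 3 := by
      apply floor_div_eq' e4pos
      · rw [e3v, e4v]; push_cast; nlinarith [hC, hE, hb, hB1, hB2]
      · rw [e3v, e4v]; push_cast; nlinarith [hC, hE, hb, hB1, hB2]
    have h := (hrec 3).1 e4pos.ne'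
    rw [h, hf, e3v, e4v]; push_cast; ring
  have e5pos : 0 < e 5 := by rw [e5v]; nlinarith [hC, hE, hb, hB1, hB2]
  have e6v : e 6 = (14 * s - 61) * b := by
    have hf : ⌊e 4 / e 5⌋ = 1 := by
      apply floor_div_eq' e5pos
      · rw [e4v, e5v]; push_cast; nlinarith [hC, hE, hb, hB1, hB2]
      · rw [e4v, e5v]; push_cast; nlinarith [hC, hE, hb, hB1, hB2]
    have h := (hrec 4).1 e5pos.ne'
    rw [h, hf, e4v, e5v]; push_cast; ring
  have e6pos : 0 < e 6 := by rw [e6v]; nlinarith [hC, hE, hb, hB1, hB2]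
  have e7v : e 7 = (170 - 39 * s) * b := by
    have hf : ⌊e 5 / e 6⌋ = 2 := by
      apply floor_div_eq' e6pos
      · rw [e5v, e6v]; push_cast; nlinarith [hC, hE, hb, hB1, hB2]
      · rw [e5v, e6v]; push_cast; nlinarith [hC, hE, hb, hB1, hB2]
    have h := (hrec 5).1 e6pos.ne'
    rw [h, hf, e5v, e6v]; push_cast; ring
  have e7pos : 0 < e 7 := by rw [e7v]; nlinarith [hC, hE, hb, hB1, hB2]
  have e8v : e 8 = (326 * s - 1421) * b := by
    have hf : ⌊e 6 / e 7⌋ = 8 := by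
      apply floor_div_eq' e7pos
      · rw [e6v, e7v]; push_cast; nlinarith [hC, hE, hb, hB1, hB2]
      · rw [e6v, e7v]; push_cast; nlinarith [hC, hE, hb, hB1, hB2]
    have h := (hrec 6).1 e7pos.ne'
    rw [h, hf, e6v, e7v]; push_cast; ring
  have e8pos : 0 < e 8 := by rw [e8v]; nlinarith [hC, hE, hb, hB1, hB2]
  -- the scaling factor
  have hlam : (0 : ℝ) < 170 - 39 * s := by nlinarith [hC, hE, hb, hB1, hB2]
  have hlam' : (170 - 39 * s : ℝ) ≠ 0 := hlam.ne'
  have key : ∀ k : ℕ, 1 ≤ k →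
      e (k + 6) = (170 - 39 * s) * e k ∧ e (k + 7) = (170 - 39 * s) * e (k + 1) := by
    intro k hk
    induction k, hk using Nat.le_induction with
    | base =>
      constructor
      · rw [e7v, he1]
      · rw [e8v, e2v]; linear_combination (39 * b) * hs2
    | succ k hk ih =>
      obtain ⟨h6, h7⟩ := ih
      refine ⟨h7, ?_⟩
      have h8 := (hrec (k + 6)).1 (hnz (k + 7))
      have h2 := (hrec k).1 (hnz (k + 1))
      have hfl : ⌊e (k + 6) / e (k + 7)⌋ = ⌊e k / e (k + 1)⌋ := by
        rw [h6, h7, mul_div_mul_left _ _ hlam']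
      show e (k + 8) = (170 - 39 * s) * e (k + 2)
      rw [h8, hfl, h6, h7, h2]
      ring
  intro k hk
  obtain ⟨h6, h7⟩ := key k hk
  rw [h6, h7, mul_div_mul_left _ _ hlam']
end

section
/- (The theorem of periodicity for quadratic irrationals, attributed by the paper to Theaetetus; Lagrange's theorem.) Let x be a real number with 1 < x, x irrational, and suppose there exist integers A, B, C with A ≠ 0 and A*x² + B*x + C = 0. Let e be the anthyphairesis remainder sequence of (x, 1). Then e n ≠ 0 for all n, and the quotient sequence is eventually periodic: there exist N : ℕ and p : ℕ with 0 < p such that for every k ≥ N, ⌊e (k + p) / e (k + p + 1)⌋ = ⌊e k / e (k+1)⌋. -/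
open Int

namespace IsAnthSeq

variable {a b : ℝ} {e : ℕ → ℝ}

theorem eq_fract_mul (he : IsAnthSeq a b e) {n : ℕ} (h : e (n + 1) ≠ 0) :
    e (n + 2) = fract (e n / e (n + 1)) * e (n + 1) := by
  rw [(he.2.2 n).1 h, fract, sub_mul, div_mul_cancel₀ _ h]

theorem pos_succ_and_irrational (he : IsAnthSeq a b e) (hb : 0 < b) (hirr : Irrational (a / b))
    (n : ℕ) : 0 < e (n + 1) ∧ Irrational (e n / e (n + 1)) := by
  induction n with
  | zero => rw [he.1, he.2.1]; exact ⟨hb, hirr⟩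
  | succ n ih =>
    obtain ⟨hpos, hr⟩ := ih
    have hfract : Irrational (fract (e n / e (n + 1))) := hr.sub_intCast _
    rw [he.eq_fract_mul hpos.ne', div_mul_cancel_right₀ hpos.ne']
    exact ⟨mul_pos (fract_pos.2 (hr.ne_int _)) hpos, hfract.inv⟩

theorem pos (he : IsAnthSeq a b e) (ha : 0 < a) (hb : 0 < b) (hirr : Irrational (a / b)) :
    ∀ n, 0 < e n
  | 0 => he.1 ▸ ha
  | n + 1 => (he.pos_succ_and_irrational hb hirr n).1

theorem div_succ_eq_inv_fract (he : IsAnthSeq a b e) (hb : 0 < b) (hirr : Irrational (a / b))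
    (n : ℕ) : e (n + 1) / e (n + 2) = (fract (e n / e (n + 1)))⁻¹ := by
  have hpos := (he.pos_succ_and_irrational hb hirr n).1
  rw [he.eq_fract_mul hpos.ne', div_mul_cancel_right₀ hpos.ne']

theorem succ_le (he : IsAnthSeq a b e) (hb : 0 < b) (hirr : Irrational (a / b)) (hba : b ≤ a) :
    ∀ n, e (n + 1) ≤ e n
  | 0 => by rw [he.1, he.2.1]; exact hba
  | n + 1 => by
    have hpos := (he.pos_succ_and_irrational hb hirr n).1
    rw [he.eq_fract_mul hpos.ne']
    exact mul_le_of_le_one_left hpos.le (fract_lt_one _).le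

end IsAnthSeq

-- `continuant q 0 1 (n + 1) / continuant q 1 0 (n + 1)` is the `n`-th convergent of
-- `[q 0; q 1, q 2, …]`.
def continuant (q : ℕ → ℤ) (u v : ℤ) : ℕ → ℤ
  | 0 => u
  | 1 => v
  | n + 2 => q n * continuant q u v (n + 1) + continuant q u v n

theorem continuant_det (q : ℕ → ℤ) (n : ℕ) :
    continuant q 0 1 (n + 1) * continuant q 1 0 n - continuant q 0 1 n * continuant q 1 0 (n + 1)
      = (-1) ^ n := by
  induction n with
  | zero => simp [continuant]
  | succ n ih => simp only [continuant, pow_succ]; linear_combination -ih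

theorem continuant_nonneg {q : ℕ → ℤ} (hq : ∀ n, 0 ≤ q n) {u v : ℤ} (hu : 0 ≤ u)
    (hv : 0 ≤ v) :
    ∀ n, 0 ≤ continuant q u v n
  | 0 => hu
  | 1 => hv
  | n + 2 => add_nonneg (mul_nonneg (hq n) (continuant_nonneg hq hu hv (n + 1)))
      (continuant_nonneg hq hu hv n)

section Remainders

variable {e : ℕ → ℝ} {q : ℕ → ℤ}

theorem continuant_mul_add_continuant_mul (hrec : ∀ n, e (n + 2) = e n - q n * e (n + 1))
    (u v : ℤ) (n : ℕ) :
    continuant q u v (n + 1) * e n + continuant q u v n * e (n + 1) = v * e 0 + u * e 1 := by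
  induction n with
  | zero => simp [continuant]
  | succ n ih => rw [← ih, hrec, continuant]; push_cast; ring

theorem continuant_sub_mul_continuant (hrec : ∀ n, e (n + 2) = e n - q n * e (n + 1)) :
    ∀ n, e 1 * continuant q 0 1 n - e 0 * continuant q 1 0 n = (-1) ^ (n + 1) * e n
  | 0 => by simp [continuant]
  | 1 => by simp [continuant]
  | n + 2 => by
    have h₀ := continuant_sub_mul_continuant hrec n
    have h₁ := continuant_sub_mul_continuant hrec (n + 1)
    simp only [continuant]
    push_cast
    rw [hrec]
    linear_combination (q n : ℝ) * h₁ + h₀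

end Remainders

section BinaryForm

variable {R : Type*} [CommRing R]

def binQuad (A B C u v : R) : R := A * u ^ 2 + B * u * v + C * v ^ 2

def binPolar (A B C u v u' v' : R) : R :=
  2 * A * u * u' + B * (u * v' + u' * v) + 2 * C * v * v'

@[simp, norm_cast]
theorem cast_binQuad (A B C u v : ℤ) :
    ((binQuad A B C u v : ℤ) : R) = binQuad (A : R) B C u v := by
  simp [binQuad]

@[simp, norm_cast]
theorem cast_binPolar (A B C u v u' v' : ℤ) :
    ((binPolar A B C u v u' v' : ℤ) : R) = binPolar (A : R) B C u v u' v' := by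
  simp [binPolar]

theorem binQuad_add_add (A B C p q p' q' s t : R) :
    binQuad A B C (p * s + p' * t) (q * s + q' * t) =
      binQuad A B C p q * s ^ 2 + binPolar A B C p q p' q' * s * t +
        binQuad A B C p' q' * t ^ 2 := by
  simp only [binQuad, binPolar]; ring

theorem discrim_binQuad_binPolar (A B C p q p' q' : R) :
    discrim (binQuad A B C p q) (binPolar A B C p q p' q') (binQuad A B C p' q') =
      (p * q' - p' * q) ^ 2 * discrim A B C := by
  simp only [discrim, binQuad, binPolar]; ring

theorem binQuad_eq_of_root {A B C x : R} (hx : A * x ^ 2 + B * x + C = 0) (u v : R) :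
    binQuad A B C u v = A * (u - x * v) ^ 2 + (2 * A * x + B) * (u - x * v) * v := by
  simp only [binQuad]; linear_combination v ^ 2 * hx

theorem binQuad_div_eq_zero {K : Type*} [Field K] {A B C x p q p' q' s t : K}
    (hx : A * x ^ 2 + B * x + C = 0) (hpx : x = p * s + p' * t) (hq : 1 = q * s + q' * t)
    (ht : t ≠ 0) :
    binQuad A B C p q * (s / t) ^ 2 + binPolar A B C p q p' q' * (s / t) +
      binQuad A B C p' q' = 0 := by
  have h := binQuad_add_add A B C p q p' q' s t
  rw [← hpx, ← hq, binQuad] at h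
  field_simp
  linear_combination hx - h

end BinaryForm

theorem abs_le_abs_discrim_add {a b c K : ℤ} (ha : |a| ≤ K) (hc : |c| ≤ K) :
    |b| ≤ |discrim a b c| + 4 * K ^ 2 := by
  have hac : a * c ≤ K ^ 2 := by
    calc a * c ≤ |a| * |c| := by rw [← abs_mul]; exact le_abs_self _
      _ ≤ K ^ 2 := by rw [sq]; exact mul_le_mul ha hc (abs_nonneg _) ((abs_nonneg _).trans ha)
  calc |b| ≤ |b| ^ 2 := Int.le_self_sq _
    _ = discrim a b c + 4 * a * c := by rw [sq_abs, discrim]; ring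
    _ ≤ |discrim a b c| + 4 * K ^ 2 := by linarith [le_abs_self (discrim a b c)]

theorem discrim_ne_zero_of_irrational {A B C : ℤ} {x : ℝ} (hA : A ≠ 0) (hirr : Irrational x)
    (hx : A * x ^ 2 + B * x + C = 0) : discrim A B C ≠ 0 := by
  intro hD
  have hsq := discrim_eq_sq_of_quadratic_eq_zero (a := (A : ℝ)) (b := B) (c := C) (x := x)
    (by linear_combination hx)
  rw [discrim] at hD hsq
  rw [show (B : ℝ) ^ 2 - 4 * A * C = 0 by exact_mod_cast hD, eq_comm, sq_eq_zero_iff] at hsq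
  refine hirr.ne_rational (-B) (2 * A) ?_
  field_simp
  push_cast
  linarith

theorem finite_setOf_quadratic_eq_zero {R : Type*} [CommRing R] [IsDomain R] {a b c : R}
    (h : (a, b, c) ≠ 0) : {r : R | a * r ^ 2 + b * r + c = 0}.Finite := by
  open Polynomial in
  have hp : C a * X ^ 2 + C b * X + C c ≠ 0 := by
    contrapose! h
    refine Prod.ext ?_ (Prod.ext ?_ ?_)
    · simpa using congrArg (coeff · 2) h
    · simpa using congrArg (coeff · 1) h
    · simpa using congrArg (coeff · 0) h
  refine (Polynomial.finite_setOfPred_isRoot hp).subset fun r hr => ?_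
  simpa using hr

def boundedQuadRoots (M : ℤ) : Set ℝ :=
  {r | ∃ a b c : ℤ, |a| ≤ M ∧ |b| ≤ M ∧ |c| ≤ M ∧ (a, b, c) ≠ 0 ∧
    a * r ^ 2 + b * r + c = 0}

theorem finite_boundedQuadRoots (M : ℤ) : (boundedQuadRoots M).Finite := by
  refine (((Set.finite_Icc (-M, -M, -M) (M, M, M)).sdiff (t := {0})).biUnion fun t ht =>
    finite_setOf_quadratic_eq_zero (a := (t.1 : ℝ)) (b := t.2.1) (c := t.2.2) ?_).subset ?_
  · obtain ⟨a, b, c⟩ := t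
    simpa using ht.2
  · rintro r ⟨a, b, c, ha, hb, hc, h0, hr⟩
    simp only [abs_le] at ha hb hc
    exact Set.mem_biUnion (x := (a, b, c)) ⟨by simp [ha, hb, hc], h0⟩ hr

theorem eventually_periodic_of_eq {α : Type*} {g : α → α} {r : ℕ → α}
    (hr : ∀ n, r (n + 1) = g (r n)) {m p : ℕ} (h : r (m + p) = r m) {k : ℕ} (hk : m ≤ k) :
    r (k + p) = r k := by
  induction k, hk using Nat.le_induction with
  | base => exact h
  | succ k _ ih => rw [Nat.add_right_comm, hr, hr, ih]

section Convergents

variable {A B C : ℤ} {x : ℝ} {e : ℕ → ℝ} {q : ℕ → ℤ}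

theorem binQuad_ratio_eq_zero (hx : A * x ^ 2 + B * x + C = 0)
    (hrec : ∀ n, e (n + 2) = e n - q n * e (n + 1)) (he0 : e 0 = x) (he1 : e 1 = 1) {n : ℕ}
    (hn : e (n + 1) ≠ 0) :
    ((binQuad A B C (continuant q 0 1 (n + 1)) (continuant q 1 0 (n + 1)) : ℤ) : ℝ) *
          (e n / e (n + 1)) ^ 2 +
        ((binPolar A B C (continuant q 0 1 (n + 1)) (continuant q 1 0 (n + 1))
          (continuant q 0 1 n) (continuant q 1 0 n) : ℤ) : ℝ) * (e n / e (n + 1)) +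
        ((binQuad A B C (continuant q 0 1 n) (continuant q 1 0 n) : ℤ) : ℝ) = 0 := by
  push_cast
  refine binQuad_div_eq_zero hx ?_ ?_ hn
  · simpa [he0] using (continuant_mul_add_continuant_mul hrec 0 1 n).symm
  · simpa [he1] using (continuant_mul_add_continuant_mul hrec 1 0 n).symm

theorem discrim_continuant (A B C : ℤ) (q : ℕ → ℤ) (n : ℕ) :
    discrim (binQuad A B C (continuant q 0 1 (n + 1)) (continuant q 1 0 (n + 1)))
      (binPolar A B C (continuant q 0 1 (n + 1)) (continuant q 1 0 (n + 1))
        (continuant q 0 1 n) (continuant q 1 0 n))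
      (binQuad A B C (continuant q 0 1 n) (continuant q 1 0 n)) = discrim A B C := by
  rw [discrim_binQuad_binPolar, continuant_det, ← pow_mul, pow_mul', neg_one_sq, one_pow, one_mul]

theorem abs_binQuad_continuant_le (hx : A * x ^ 2 + B * x + C = 0)
    (hrec : ∀ n, e (n + 2) = e n - q n * e (n + 1)) (he0 : e 0 = x) (he1 : e 1 = 1)
    (hpos : ∀ n, 0 < e n) (hanti : Antitone e) (hq : ∀ n, 0 ≤ q n) (n : ℕ) :
    |((binQuad A B C (continuant q 0 1 (n + 1)) (continuant q 1 0 (n + 1)) : ℤ) : ℝ)| ≤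
      |A| + |2 * A * x + B| := by
  set h := continuant q 0 1
  set k := continuant q 1 0
  have hk : ∀ m, (0 : ℝ) ≤ k m := fun m => mod_cast continuant_nonneg hq zero_le_one le_rfl m
  have hdist : |(h (n + 1) : ℝ) - x * k (n + 1)| = e (n + 1) := by
    have := continuant_sub_mul_continuant hrec (n + 1)
    rw [he0, he1, one_mul] at this
    rw [this, abs_mul, abs_pow, abs_neg, abs_one, one_pow, one_mul, abs_of_pos (hpos _)]
  have hke : (k (n + 1) : ℝ) * e (n + 1) ≤ 1 := by
    have hsum : (k (n + 1) : ℝ) * e n + k n * e (n + 1) = 1 := by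
      simpa [he1] using continuant_mul_add_continuant_mul hrec 1 0 n
    nlinarith [hk n, hk (n + 1), hpos (n + 1), hanti (Nat.le_succ n)]
  have hle : e (n + 1) ≤ 1 := he1 ▸ hanti (Nat.le_add_left 1 n)
  rw [cast_binQuad, binQuad_eq_of_root hx]
  calc |(A : ℝ) * (h (n + 1) - x * k (n + 1)) ^ 2 +
        (2 * A * x + B) * (h (n + 1) - x * k (n + 1)) * k (n + 1)|
      ≤ |(A : ℝ)| * e (n + 1) ^ 2 + |2 * A * x + B| * (k (n + 1) * e (n + 1)) := by
        refine (abs_add_le _ _).trans (le_of_eq ?_)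
        rw [abs_mul, abs_mul, abs_mul, abs_pow, hdist, abs_of_nonneg (hk _)]
        ring
    _ ≤ |(A : ℝ)| * 1 + |2 * A * x + B| * 1 := by
        gcongr
        nlinarith [hpos (n + 1)]
    _ = _ := by push_cast; ring

theorem exists_mapsTo_ratio_boundedQuadRoots (hD : discrim A B C ≠ 0)
    (hx : A * x ^ 2 + B * x + C = 0) (hrec : ∀ n, e (n + 2) = e n - q n * e (n + 1))
    (he0 : e 0 = x) (he1 : e 1 = 1) (hpos : ∀ n, 0 < e n) (hanti : Antitone e)
    (hq : ∀ n, 0 ≤ q n) :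
    ∃ M, Set.MapsTo (fun n => e n / e (n + 1)) (Set.Ici 1) (boundedQuadRoots M) := by
  set K := ⌊|(A : ℝ)| + |2 * A * x + B|⌋
  have hK : ∀ n, |binQuad A B C (continuant q 0 1 (n + 1)) (continuant q 1 0 (n + 1))| ≤ K :=
    fun n => Int.le_floor.2 <| by
      exact_mod_cast abs_binQuad_continuant_le hx hrec he0 he1 hpos hanti hq n
  refine ⟨max K (|discrim A B C| + 4 * K ^ 2), fun n (hn : 1 ≤ n) => ?_⟩
  obtain ⟨n, rfl⟩ := Nat.exists_eq_add_of_le' hn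
  have hdisc := discrim_continuant A B C q (n + 1)
  have ha := hK (n + 1)
  have hc := hK n
  refine ⟨_, _, _, le_max_of_le_left ha, le_max_of_le_right ?_, le_max_of_le_left hc, ?_,
    binQuad_ratio_eq_zero hx hrec he0 he1 (hpos _).ne'⟩
  · rw [← hdisc]; exact abs_le_abs_discrim_add ha hc
  · intro h0
    simp only [Prod.mk_eq_zero] at h0
    rw [h0.1, h0.2.1, h0.2.2] at hdisc
    exact hD (by rw [← hdisc]; simp [discrim])

end Convergents

/-- Lagrange's theorem (attributed by the paper to Theaetetus): the
anthyphairesis of a quadratic irrational `x > 1` to `1` never terminates and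
its quotient sequence is eventually periodic. -/
theorem quadratic_irrational_eventually_periodic
    (x : ℝ) (hx1 : 1 < x) (hirr : Irrational x)
    (A B C : ℤ) (hA : A ≠ 0)
    (hquad : (A : ℝ) * x ^ 2 + (B : ℝ) * x + (C : ℝ) = 0)
    (e : ℕ → ℝ) (he : IsAnthSeq x 1 e) :
    (∀ n : ℕ, e n ≠ 0) ∧
    ∃ N p : ℕ, 0 < p ∧ ∀ k : ℕ, N ≤ k →
      ⌊e (k + p) / e (k + p + 1)⌋ = ⌊e k / e (k + 1)⌋ := by
  have hirr' : Irrational (x / 1) := by rwa [div_one]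
  have hpos := he.pos (by linarith) one_pos hirr'
  refine ⟨fun n => (hpos n).ne', ?_⟩
  obtain ⟨M, hM⟩ := exists_mapsTo_ratio_boundedQuadRoots (q := fun n => ⌊e n / e (n + 1)⌋)
    (discrim_ne_zero_of_irrational hA hirr hquad) hquad (fun n => (he.2.2 n).1 (hpos _).ne')
    he.1 he.2.1 hpos (antitone_nat_of_succ_le (he.succ_le one_pos hirr' hx1.le))
    (fun n => Int.floor_nonneg.2 (div_pos (hpos _) (hpos _)).le)
  obtain ⟨m, -, m', -, hlt, heq⟩ :=
    (Set.Ici_infinite 1).exists_lt_map_eq_of_mapsTo hM (finite_boundedQuadRoots M)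
  refine ⟨m, m' - m, by omega, fun k hk => ?_⟩
  rw [eventually_periodic_of_eq (r := fun n => e n / e (n + 1)) (g := fun y => (fract y)⁻¹)
    (he.div_succ_eq_inv_fract one_pos hirr') (by simp only [Nat.add_sub_cancel' hlt.le, heq]) hk]
end
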